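/- Subject reduction: if Γ ⊢ M : σ is derivable in the type assignment system for Λ_R and M ⟶ N, then Γ ⊢ N : σ is derivable. -/

import Mathlib

/-- Terms of the record calculus `Λ_R`, with de Bruijn indices for bound variables
(so that terms are identified up to α-conversion) and labels drawn from `ℕ`.
Records are finite lists of label/term pairs; in `merge M fs` the right operand
is syntactically a record. -/
inductive Tm where
  | var : Nat → Tm
  | lam : Tm → Tm
  | app : Tm → Tm → Tm
  | sel : Tm → Nat → Tm
  | rcd : List (Nat × Tm) → Tm
  | merge : Tm → List (Nat × Tm) → Tm

namespace Tm

/-- The list of field labels of a record. -/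
def keys (fs : List (Nat × Tm)) : List Nat := fs.map Prod.fst

/-- The set of field labels `lbl(R)` of a record. -/
def lblR (fs : List (Nat × Tm)) : Finset Nat := (keys fs).toFinset

/-- Record merge on field lists: fields of the first record whose label does not
occur in the second record, followed by all fields of the second record. -/
def mergeFields (fs gs : List (Nat × Tm)) : List (Nat × Tm) :=
  fs.filter (fun p => decide (p.1 ∉ keys gs)) ++ gs

end Tm
namespace Tm

def liftF (f : Nat → Nat) : Nat → Nat
  | 0 => 0
  | n + 1 => f n + 1

mutual
/-- Renaming of (de Bruijn) variables. -/
def rename (f : Nat → Nat) : Tm → Tm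
  | var x => var (f x)
  | lam M => lam (rename (liftF f) M)
  | app M N => app (rename f M) (rename f N)
  | sel M l => sel (rename f M) l
  | rcd fs => rcd (renameFields f fs)
  | merge M fs => merge (rename f M) (renameFields f fs)
def renameFields (f : Nat → Nat) : List (Nat × Tm) → List (Nat × Tm)
  | [] => []
  | (l, M) :: fs => (l, rename f M) :: renameFields f fs
end

def upS (s : Nat → Tm) : Nat → Tm
  | 0 => var 0
  | n + 1 => rename Nat.succ (s n)

mutual
/-- Capture-avoiding (parallel) substitution. -/
def subst (s : Nat → Tm) : Tm → Tm
  | var x => s x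
  | lam M => lam (subst (upS s) M)
  | app M N => app (subst s M) (subst s N)
  | sel M l => sel (subst s M) l
  | rcd fs => rcd (substFields s fs)
  | merge M fs => merge (subst s M) (substFields s fs)
def substFields (s : Nat → Tm) : List (Nat × Tm) → List (Nat × Tm)
  | [] => []
  | (l, M) :: fs => (l, subst s M) :: substFields s fs
end

/-- `M[N/x]` for the outermost bound variable: capture-avoiding substitution of `N`
for the de Bruijn index `0` in `M`. -/
def subst0 (N M : Tm) : Tm :=
  subst (fun n => match n with | 0 => N | n + 1 => var n) M

end Tm
/-- The reduction relation of `Λ_R`: the least compatible relation containing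
(β), (sel) and (⊕). -/
inductive Red : Tm → Tm → Prop where
  | beta (M N : Tm) : Red (.app (.lam M) N) (Tm.subst0 N M)
  | sel {fs : List (Nat × Tm)} {l : Nat} {M : Tm} :
      List.lookup l fs = some M → Red (.sel (.rcd fs) l) M
  | mergeRcd (fs gs : List (Nat × Tm)) :
      Red (.merge (.rcd fs) gs) (.rcd (Tm.mergeFields fs gs))
  | appL {M M' : Tm} (N : Tm) : Red M M' → Red (.app M N) (.app M' N)
  | appR (M : Tm) {N N' : Tm} : Red N N' → Red (.app M N) (.app M N')
  | lam {M M' : Tm} : Red M M' → Red (.lam M) (.lam M')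
  | selC {M M' : Tm} (l : Nat) : Red M M' → Red (.sel M l) (.sel M' l)
  | mergeL {M M' : Tm} (fs : List (Nat × Tm)) : Red M M' → Red (.merge M fs) (.merge M' fs)
  | rcdField {M M' : Tm} (fs gs : List (Nat × Tm)) (l : Nat) : Red M M' →
      Red (.rcd (fs ++ (l, M) :: gs)) (.rcd (fs ++ (l, M') :: gs))
  | mergeField (N : Tm) {M M' : Tm} (fs gs : List (Nat × Tm)) (l : Nat) : Red M M' →
      Red (.merge N (fs ++ (l, M) :: gs)) (.merge N (fs ++ (l, M') :: gs))

/-- Reflexive–transitive closure `⟶*` of reduction. -/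
def RedStar : Tm → Tm → Prop := Relation.ReflTransGen Red
/-- Intersection and record types `𝕋`. Record types are the types satisfying `IsRec`. -/
inductive Ty where
  | const : Nat → Ty
  | omega : Ty
  | arrow : Ty → Ty → Ty
  | inter : Ty → Ty → Ty
  | empty : Ty
  | fld : Nat → Ty → Ty
  | merge : Ty → Ty → Ty
deriving DecidableEq

/-- The record types `𝕋_R ⊆ 𝕋`. -/
inductive IsRec : Ty → Prop where
  | empty : IsRec .empty
  | fld (l : Nat) (σ : Ty) : IsRec (.fld l σ)
  | merge {ρ₁ ρ₂ : Ty} : IsRec ρ₁ → IsRec ρ₂ → IsRec (.merge ρ₁ ρ₂)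
  | inter {ρ₁ ρ₂ : Ty} : IsRec ρ₁ → IsRec ρ₂ → IsRec (.inter ρ₁ ρ₂)

/-- Subtyping on `𝕋`: the least preorder satisfying the BCD axioms together with
the record and record-merge axioms. -/
inductive TySub : Ty → Ty → Prop where
  | refl (σ : Ty) : TySub σ σ
  | trans {σ τ υ : Ty} : TySub σ τ → TySub τ υ → TySub σ υ
  | le_omega (σ : Ty) : TySub σ .omega
  | omega_arrow : TySub .omega (.arrow .omega .omega)
  | inter_left (σ τ : Ty) : TySub (.inter σ τ) σ
  | inter_right (σ τ : Ty) : TySub (.inter σ τ) τ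
  | le_inter {σ τ₁ τ₂ : Ty} : TySub σ τ₁ → TySub σ τ₂ → TySub σ (.inter τ₁ τ₂)
  | arrow_inter (σ τ₁ τ₂ : Ty) :
      TySub (.inter (.arrow σ τ₁) (.arrow σ τ₂)) (.arrow σ (.inter τ₁ τ₂))
  | arrow_mono {σ₁ σ₂ τ₁ τ₂ : Ty} : TySub σ₂ σ₁ → TySub τ₁ τ₂ →
      TySub (.arrow σ₁ τ₁) (.arrow σ₂ τ₂)
  | fld_empty (l : Nat) (σ : Ty) : TySub (.fld l σ) .empty
  | fld_inter (l : Nat) (σ τ : Ty) :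
      TySub (.inter (.fld l σ) (.fld l τ)) (.fld l (.inter σ τ))
  | fld_mono {σ τ : Ty} (l : Nat) : TySub σ τ → TySub (.fld l σ) (.fld l τ)
  | merge_empty_r {ρ : Ty} : IsRec ρ → TySub (.merge ρ .empty) ρ
  | merge_empty_r' {ρ : Ty} : IsRec ρ → TySub ρ (.merge ρ .empty)
  | merge_empty_l {ρ : Ty} : IsRec ρ → TySub (.merge .empty ρ) ρ
  | merge_empty_l' {ρ : Ty} : IsRec ρ → TySub ρ (.merge .empty ρ)
  | merge_assoc {ρ₁ ρ₂ ρ₃ : Ty} : IsRec ρ₁ → IsRec ρ₂ → IsRec ρ₃ →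
      TySub (.merge (.merge ρ₁ ρ₂) ρ₃) (.merge ρ₁ (.merge ρ₂ ρ₃))
  | merge_assoc' {ρ₁ ρ₂ ρ₃ : Ty} : IsRec ρ₁ → IsRec ρ₂ → IsRec ρ₃ →
      TySub (.merge ρ₁ (.merge ρ₂ ρ₃)) (.merge (.merge ρ₁ ρ₂) ρ₃)
  | merge_inter {ρ₁ ρ₂ ρ₃ : Ty} : IsRec ρ₁ → IsRec ρ₂ → IsRec ρ₃ →
      TySub (.merge (.inter ρ₁ ρ₂) ρ₃) (.inter (.merge ρ₁ ρ₃) (.merge ρ₂ ρ₃))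
  | merge_inter' {ρ₁ ρ₂ ρ₃ : Ty} : IsRec ρ₁ → IsRec ρ₂ → IsRec ρ₃ →
      TySub (.inter (.merge ρ₁ ρ₃) (.merge ρ₂ ρ₃)) (.merge (.inter ρ₁ ρ₂) ρ₃)
  | fld_absorb {ρ : Ty} (l : Nat) (σ τ : Ty) : IsRec ρ →
      TySub (.merge (.fld l σ) (.inter (.fld l τ) ρ)) (.inter (.fld l τ) ρ)
  | fld_absorb' {ρ : Ty} (l : Nat) (σ τ : Ty) : IsRec ρ →
      TySub (.inter (.fld l τ) ρ) (.merge (.fld l σ) (.inter (.fld l τ) ρ))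
  | fld_comm {ρ : Ty} {l l' : Nat} (σ τ : Ty) : l ≠ l' → IsRec ρ →
      TySub (.merge (.fld l σ) (.inter (.fld l' τ) ρ))
          (.inter (.fld l' τ) (.merge (.fld l σ) ρ))
  | fld_comm' {ρ : Ty} {l l' : Nat} (σ τ : Ty) : l ≠ l' → IsRec ρ →
      TySub (.inter (.fld l' τ) (.merge (.fld l σ) ρ))
          (.merge (.fld l σ) (.inter (.fld l' τ) ρ))
  | merge_mono_l {ρ₁ ρ₂ ρ : Ty} : IsRec ρ₁ → IsRec ρ₂ → IsRec ρ →
      TySub ρ₁ ρ₂ → TySub (.merge ρ₁ ρ) (.merge ρ₂ ρ)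
  | merge_congr_r {ρ ρ₁ ρ₂ : Ty} : IsRec ρ → IsRec ρ₁ → IsRec ρ₂ →
      TySub ρ₁ ρ₂ → TySub ρ₂ ρ₁ → TySub (.merge ρ ρ₁) (.merge ρ ρ₂)

/-- Type equality: mutual subtyping. -/
def TyEq (σ τ : Ty) : Prop := TySub σ τ ∧ TySub τ σ
/-- The label map on record types. -/
def lbl : Ty → Finset Nat
  | .const _ => ∅
  | .omega => ∅
  | .arrow _ _ => ∅
  | .empty => ∅
  | .fld l _ => {l}
  | .inter ρ₁ ρ₂ => lbl ρ₁ ∪ lbl ρ₂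
  | .merge ρ₁ ρ₂ => lbl ρ₁ ∪ lbl ρ₂
/-- The type assignment system for `Λ_R`. With de Bruijn indices, a basis `Γ` is a
list of types, extension `Γ, x:σ` is `σ :: Γ`, and the axiom rule looks up the
type of a variable index in `Γ`. -/
inductive Typing : List Ty → Tm → Ty → Prop where
  | var {Γ : List Ty} {x : Nat} {σ : Ty} :
      Γ[x]? = some σ → Typing Γ (.var x) σ
  | lam {Γ : List Ty} {M : Tm} {σ τ : Ty} :
      Typing (σ :: Γ) M τ → Typing Γ (.lam M) (.arrow σ τ)
  | app {Γ : List Ty} {M N : Tm} {σ τ : Ty} :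
      Typing Γ M (.arrow σ τ) → Typing Γ N σ → Typing Γ (.app M N) τ
  | inter {Γ : List Ty} {M : Tm} {σ τ : Ty} :
      Typing Γ M σ → Typing Γ M τ → Typing Γ M (.inter σ τ)
  | omega {Γ : List Ty} (M : Tm) : Typing Γ M .omega
  | sub {Γ : List Ty} {M : Tm} {σ τ : Ty} :
      Typing Γ M σ → TySub σ τ → Typing Γ M τ
  | empty {Γ : List Ty} (fs : List (Nat × Tm)) : Typing Γ (.rcd fs) .empty
  | rcd {Γ : List Ty} {fs : List (Nat × Tm)} {l : Nat} {M : Tm} {σ : Ty} :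
      List.lookup l fs = some M → Typing Γ M σ → Typing Γ (.rcd fs) (.fld l σ)
  | sel {Γ : List Ty} {M : Tm} {l : Nat} {σ : Ty} :
      Typing Γ M (.fld l σ) → Typing Γ (.sel M l) σ
  | merge {Γ : List Ty} {M : Tm} {fs : List (Nat × Tm)} {ρ₁ ρ₂ : Ty} :
      Typing Γ M ρ₁ → Typing Γ (.rcd fs) ρ₂ → IsRec ρ₁ → IsRec ρ₂ →
      Tm.lblR fs = lbl ρ₂ → Typing Γ (.merge M fs) (.merge ρ₁ ρ₂)

/-!
Induction on the typing derivation, inverting the reduction step; (β) is the substitution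
lemma. The difficulty is the subsumption rule, which is handled through the top-level
components of a type: its arrow components `σ → τ` and, at each label `l`, its field
components `⟨l : σ⟩` (in `ρ₁ + ρ₂` the fields of `ρ₂` override those of `ρ₁`). A property of
components that is closed under subtyping and intersection passes from a type to each of its
supertypes; for "`P` has type `τ` under `x : σ`" and "the `l`-field of the record has type
`σ`" this inverts the typings of abstractions and records. For (⊕), every record type equals
the intersection of its field components, so the merged record has type `ρ₁ + ρ₂` as soon as
each of its fields has the types of the corresponding components.
-/

theorem List.lookup_filter_of_forall {α β : Type*} [BEq α] [LawfulBEq α] {k : α}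
    {p : α × β → Bool} (hp : ∀ q : α × β, q.1 = k → p q) :
    ∀ xs : List (α × β), (xs.filter p).lookup k = xs.lookup k
  | [] => rfl
  | (a, b) :: xs => by
    by_cases hk : k = a
    · subst hk
      simp [List.filter, hp (k, b) rfl]
    · cases hpa : p (a, b) <;>
        simp [List.filter, hpa, List.lookup_cons, beq_false_of_ne hk,
          List.lookup_filter_of_forall hp xs]

theorem List.lookup_append_cons_eq_some {α β : Type*} [BEq α] [LawfulBEq α] {k l : α}
    {xs ys : List (α × β)} {b b' c : β} (h : (xs ++ (l, b) :: ys).lookup k = some c) :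
    (xs ++ (l, b') :: ys).lookup k = some c ∨ c = b ∧ (xs ++ (l, b') :: ys).lookup k = some b' := by
  rw [List.lookup_append] at h ⊢
  cases hx : xs.lookup k with
  | some _ => rw [hx] at h; exact .inl h
  | none =>
    rw [hx, Option.none_or] at h
    rw [Option.none_or]
    by_cases hk : k = l
    · subst hk
      rw [List.lookup_cons_self] at h ⊢
      exact .inr ⟨(Option.some.inj h).symm, rfl⟩
    · rw [List.lookup_cons, beq_false_of_ne hk] at h ⊢
      exact .inl h

namespace Tm

theorem lookup_eq_none_of_not_mem_keys {l : Nat} {fs : List (Nat × Tm)} (h : l ∉ keys fs) :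
    fs.lookup l = none := by
  rw [List.lookup_eq_none_iff]
  intro p hp
  exact bne_iff_ne.mpr fun he => h (he ▸ List.mem_map_of_mem hp)

theorem lookup_mergeFields (fs gs : List (Nat × Tm)) (l : Nat) :
    (mergeFields fs gs).lookup l = if l ∈ keys gs then gs.lookup l else fs.lookup l := by
  rw [mergeFields, List.lookup_append]
  split_ifs with hl
  · rw [lookup_eq_none_of_not_mem_keys (fs := List.filter _ fs)]
    · rfl
    · simp only [keys, List.mem_map, List.mem_filter, decide_eq_true_eq]
      rintro ⟨q, ⟨-, hq⟩, rfl⟩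
      exact hq (by simpa [keys] using hl)
  · rw [List.lookup_filter_of_forall (by rintro q rfl; simpa using hl),
      lookup_eq_none_of_not_mem_keys hl, Option.or_none]

theorem lookup_renameFields (f : Nat → Nat) (l : Nat) :
    ∀ fs : List (Nat × Tm), (renameFields f fs).lookup l = (fs.lookup l).map (rename f)
  | [] => rfl
  | (k, _) :: fs => by
    rw [renameFields, List.lookup_cons, List.lookup_cons]
    cases l == k
    exacts [lookup_renameFields f l fs, rfl]

theorem lookup_substFields (s : Nat → Tm) (l : Nat) :
    ∀ fs : List (Nat × Tm), (substFields s fs).lookup l = (fs.lookup l).map (subst s)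
  | [] => rfl
  | (k, _) :: fs => by
    rw [substFields, List.lookup_cons, List.lookup_cons]
    cases l == k
    exacts [lookup_substFields s l fs, rfl]

theorem keys_renameFields (f : Nat → Nat) :
    ∀ fs : List (Nat × Tm), keys (renameFields f fs) = keys fs
  | [] => rfl
  | (k, _) :: fs => congrArg (k :: ·) (keys_renameFields f fs)

theorem keys_substFields (s : Nat → Tm) :
    ∀ fs : List (Nat × Tm), keys (substFields s fs) = keys fs
  | [] => rfl
  | (k, _) :: fs => congrArg (k :: ·) (keys_substFields s fs)

end Tm

namespace Ty

def fieldsAt (l : Nat) : Ty → List Ty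
  | const _ => []
  | omega => []
  | arrow _ _ => []
  | inter σ τ => σ.fieldsAt l ++ τ.fieldsAt l
  | empty => []
  | fld l' σ => if l' = l then [σ] else []
  | merge ρ₁ ρ₂ => if l ∈ lbl ρ₂ then ρ₂.fieldsAt l else ρ₁.fieldsAt l

def arrows : Ty → List (Ty × Ty)
  | arrow σ τ => [(σ, τ)]
  | inter σ τ => σ.arrows ++ τ.arrows
  | _ => []

theorem mem_lbl_of_mem_fieldsAt {l : Nat} {σ τ : Ty} (h : τ ∈ σ.fieldsAt l) : l ∈ lbl σ := by
  induction σ <;> grind [fieldsAt, lbl]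

theorem fieldsAt_eq_nil_of_not_mem {l : Nat} {σ : Ty} (h : l ∉ lbl σ) : σ.fieldsAt l = [] :=
  List.eq_nil_iff_forall_not_mem.2 fun _ hτ => h (mem_lbl_of_mem_fieldsAt hτ)

theorem arrows_eq_nil {ρ : Ty} (h : IsRec ρ) : ρ.arrows = [] := by
  induction h <;> simp [arrows, *]

end Ty

namespace TySub

theorem lbl_subset {σ τ : Ty} (h : TySub σ τ) : lbl τ ⊆ lbl σ := by
  induction h <;> simp only [Finset.subset_iff, lbl, Finset.mem_union] at * <;> grind

theorem forall_fieldsAt {P : Ty → Prop} (hsub : ∀ {σ τ}, P σ → TySub σ τ → P τ)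
    (hinter : ∀ {σ τ}, P σ → P τ → P (.inter σ τ)) {υ₁ υ₂ : Ty} (h : TySub υ₁ υ₂) (l : Nat)
    (h₁ : ∀ σ ∈ υ₁.fieldsAt l, P σ) : ∀ σ ∈ υ₂.fieldsAt l, P σ := by
  induction h generalizing l with
  | refl => exact h₁
  | trans _ _ ih₁ ih₂ => exact ih₂ l (ih₁ l h₁)
  | le_inter _ _ ih₁ ih₂ =>
    simpa [Ty.fieldsAt, or_imp, forall_and] using ⟨ih₁ l h₁, ih₂ l h₁⟩
  | fld_inter l' σ τ =>
    simp only [Ty.fieldsAt] at h₁ ⊢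
    split_ifs at h₁ ⊢ <;> simp_all
  | fld_mono l' hst =>
    simp only [Ty.fieldsAt] at h₁ ⊢
    split_ifs at h₁ ⊢
    · simpa using hsub (h₁ _ (List.mem_singleton_self _)) hst
    · simp
  | merge_mono_l _ _ _ _ ih =>
    simp only [Ty.fieldsAt] at h₁ ⊢
    split_ifs at h₁ ⊢
    exacts [h₁, ih l h₁]
  | @merge_congr_r _ ρ₁ ρ₂ _ _ _ h₁₂ h₂₁ ih =>
    have hl : lbl ρ₁ = lbl ρ₂ := (lbl_subset h₂₁).antisymm (lbl_subset h₁₂)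
    simp only [Ty.fieldsAt, hl] at h₁ ⊢
    split_ifs at h₁ ⊢
    exacts [ih l h₁, h₁]
  | _ =>
    -- in the remaining axioms each component of the supertype is one of the subtype
    refine fun σ hσ => h₁ σ ?_
    simp only [Ty.fieldsAt, lbl, Finset.mem_union, List.mem_append] at hσ ⊢
    (try split_ifs at hσ ⊢) <;> simp_all [Ty.fieldsAt_eq_nil_of_not_mem]

theorem forall_arrows {Q : Ty → Ty → Prop} (hω : Q .omega .omega)
    (hsub : ∀ {σ₁ σ₂ τ₁ τ₂}, Q σ₁ τ₁ → TySub σ₂ σ₁ → TySub τ₁ τ₂ → Q σ₂ τ₂)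
    (hinter : ∀ {σ τ₁ τ₂}, Q σ τ₁ → Q σ τ₂ → Q σ (.inter τ₁ τ₂)) {υ₁ υ₂ : Ty}
    (h : TySub υ₁ υ₂) (h₁ : ∀ p ∈ υ₁.arrows, Q p.1 p.2) : ∀ p ∈ υ₂.arrows, Q p.1 p.2 := by
  induction h with
  | refl => exact h₁
  | trans _ _ ih₁ ih₂ => exact ih₂ (ih₁ h₁)
  | le_inter _ _ ih₁ ih₂ =>
    intro p hp
    rcases List.mem_append.1 hp with hp | hp
    exacts [ih₁ h₁ p hp, ih₂ h₁ p hp]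
  | omega_arrow => simpa [Ty.arrows] using hω
  | arrow_inter => simp_all [Ty.arrows]
  | arrow_mono hσ hτ => simpa [Ty.arrows] using hsub (by simpa [Ty.arrows] using h₁) hσ hτ
  | merge_empty_r hρ | merge_empty_l hρ | fld_absorb _ _ _ hρ =>
    simp [Ty.arrows, Ty.arrows_eq_nil hρ]
  | _ => simp_all [Ty.arrows]

end TySub

namespace TyEq

theorem refl (σ : Ty) : TyEq σ σ := ⟨.refl σ, .refl σ⟩

theorem trans {σ τ υ : Ty} (h₁ : TyEq σ τ) (h₂ : TyEq τ υ) : TyEq σ υ :=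
  ⟨h₁.1.trans h₂.1, h₂.2.trans h₁.2⟩

theorem inter {σ₁ σ₂ τ₁ τ₂ : Ty} (h₁ : TyEq σ₁ τ₁) (h₂ : TyEq σ₂ τ₂) :
    TyEq (.inter σ₁ σ₂) (.inter τ₁ τ₂) :=
  ⟨.le_inter (.trans (.inter_left _ _) h₁.1) (.trans (.inter_right _ _) h₂.1),
   .le_inter (.trans (.inter_left _ _) h₁.2) (.trans (.inter_right _ _) h₂.2)⟩

theorem merge {ρ₁ ρ₂ ρ₁' ρ₂' : Ty} (hr₁ : IsRec ρ₁) (hr₂ : IsRec ρ₂) (hr₁' : IsRec ρ₁')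
    (hr₂' : IsRec ρ₂') (h₁ : TyEq ρ₁ ρ₁') (h₂ : TyEq ρ₂ ρ₂') :
    TyEq (.merge ρ₁ ρ₂) (.merge ρ₁' ρ₂') :=
  ⟨(TySub.merge_mono_l hr₁ hr₁' hr₂ h₁.1).trans (.merge_congr_r hr₁' hr₂ hr₂' h₂.1 h₂.2),
   (TySub.merge_congr_r hr₁' hr₂' hr₂ h₂.2 h₂.1).trans (.merge_mono_l hr₁' hr₁ hr₂ h₁.2)⟩

end TyEq

namespace Ty

def record : List (Nat × Ty) → Ty
  | [] => empty
  | (l, σ) :: L => inter (fld l σ) (record L)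

theorem isRec_record : ∀ L : List (Nat × Ty), IsRec (record L)
  | [] => .empty
  | (l, σ) :: L => .inter (.fld l σ) (isRec_record L)

theorem mem_lbl_record {l : Nat} : ∀ {L : List (Nat × Ty)}, l ∈ lbl (record L) ↔ l ∈ L.map Prod.fst
  | [] => by simp [record, lbl]
  | (l', σ) :: L => by simp [record, lbl, mem_lbl_record, eq_comm]

theorem record_le_empty : ∀ L : List (Nat × Ty), TySub (record L) empty
  | [] => .refl _
  | (_, _) :: L => .trans (.inter_right _ _) (record_le_empty L)

theorem record_le_fld {L : List (Nat × Ty)} {p : Nat × Ty} (hp : p ∈ L) :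
    TySub (record L) (fld p.1 p.2) := by
  induction L with
  | nil => cases hp
  | cons q L ih =>
    rcases List.mem_cons.1 hp with rfl | hp
    · exact .inter_left _ _
    · exact .trans (.inter_right _ _) (ih hp)

theorem le_record {υ : Ty} (hυ : TySub υ empty) :
    ∀ {L : List (Nat × Ty)}, (∀ p ∈ L, TySub υ (fld p.1 p.2)) → TySub υ (record L)
  | [], _ => hυ
  | (l, σ) :: L, h => .le_inter (h (l, σ) (by simp)) (le_record hυ fun p hp => h p (by simp [hp]))

theorem record_le_of_subset {L L' : List (Nat × Ty)} (h : L' ⊆ L) :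
    TySub (record L) (record L') :=
  le_record (record_le_empty L) fun _ hp => record_le_fld (h hp)

theorem tyEq_record_of_mem_iff {L L' : List (Nat × Ty)} (h : ∀ p, p ∈ L ↔ p ∈ L') :
    TyEq (record L) (record L') :=
  ⟨record_le_of_subset fun p => (h p).2, record_le_of_subset fun p => (h p).1⟩

theorem tyEq_inter_record (L₁ L₂ : List (Nat × Ty)) :
    TyEq (inter (record L₁) (record L₂)) (record (L₁ ++ L₂)) := by
  refine ⟨le_record (.trans (.inter_left _ _) (record_le_empty L₁)) fun p hp => ?_,
    .le_inter (record_le_of_subset (List.subset_append_left _ _))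
      (record_le_of_subset (List.subset_append_right _ _))⟩
  rcases List.mem_append.1 hp with hp | hp
  exacts [.trans (.inter_left _ _) (record_le_fld hp), .trans (.inter_right _ _) (record_le_fld hp)]

theorem tyEq_merge_fld_record (l : Nat) (σ : Ty) :
    ∀ L : List (Nat × Ty), TyEq (merge (fld l σ) (record L))
      (record (if l ∈ L.map Prod.fst then L else (l, σ) :: L))
  | [] => ⟨.trans (.merge_empty_r (.fld l σ)) (.le_inter (.refl _) (.fld_empty l σ)),
      .trans (.inter_left _ _) (.merge_empty_r' (.fld l σ))⟩
  | (l', τ) :: L => by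
    by_cases hl : l' = l
    · subst hl
      rw [if_pos (by simp)]
      exact ⟨.fld_absorb l' σ τ (isRec_record L), .fld_absorb' l' σ τ (isRec_record L)⟩
    · have hcomm : TyEq (merge (fld l σ) (record ((l', τ) :: L)))
          (inter (fld l' τ) (merge (fld l σ) (record L))) :=
        ⟨.fld_comm σ τ (Ne.symm hl) (isRec_record L), .fld_comm' σ τ (Ne.symm hl) (isRec_record L)⟩
      refine hcomm.trans ((TyEq.refl _).inter (tyEq_merge_fld_record l σ L) |>.trans ?_)
      split_ifs with h₁ h₂ h₂
      · exact TyEq.refl _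
      · simp_all
      · simp_all
      · exact tyEq_record_of_mem_iff (L := (l', τ) :: (l, σ) :: L) fun p => by simp [or_left_comm]

theorem tyEq_merge_record (L₂ : List (Nat × Ty)) :
    ∀ L₁ : List (Nat × Ty), TyEq (merge (record L₁) (record L₂))
      (record (L₁.filter (fun p => decide (p.1 ∉ L₂.map Prod.fst)) ++ L₂))
  | [] => ⟨.merge_empty_l (isRec_record L₂), .merge_empty_l' (isRec_record L₂)⟩
  | (l, σ) :: L₁ => by
    have hdist : TyEq (merge (record ((l, σ) :: L₁)) (record L₂))
        (inter (merge (fld l σ) (record L₂)) (merge (record L₁) (record L₂))) :=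
      ⟨.merge_inter (.fld _ _) (isRec_record _) (isRec_record _),
       .merge_inter' (.fld _ _) (isRec_record _) (isRec_record _)⟩
    refine hdist.trans (((tyEq_merge_fld_record l σ L₂).inter
      (tyEq_merge_record L₂ L₁)).trans ((tyEq_inter_record _ _).trans ?_))
    refine tyEq_record_of_mem_iff fun p => ?_
    split_ifs with hl <;> simp [hl] <;> tauto

end Ty

theorem IsRec.exists_tyEq_record {ρ : Ty} (h : IsRec ρ) :
    ∃ L : List (Nat × Ty), TyEq ρ (Ty.record L) ∧ ∀ p ∈ L, p.2 ∈ ρ.fieldsAt p.1 := by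
  induction h with
  | empty => exact ⟨[], TyEq.refl _, by simp⟩
  | fld l σ =>
    exact ⟨[(l, σ)], ⟨.le_inter (.refl _) (.fld_empty l σ), .inter_left _ _⟩,
      by simp [Ty.fieldsAt]⟩
  | inter _ _ ih₁ ih₂ =>
    obtain ⟨L₁, e₁, v₁⟩ := ih₁
    obtain ⟨L₂, e₂, v₂⟩ := ih₂
    refine ⟨L₁ ++ L₂, (e₁.inter e₂).trans (Ty.tyEq_inter_record L₁ L₂), fun p hp => ?_⟩
    rcases List.mem_append.1 hp with hp | hp
    exacts [List.mem_append_left _ (v₁ p hp), List.mem_append_right _ (v₂ p hp)]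
  | @merge ρ₁ ρ₂ h₁ h₂ ih₁ ih₂ =>
    obtain ⟨L₁, e₁, v₁⟩ := ih₁
    obtain ⟨L₂, e₂, v₂⟩ := ih₂
    refine ⟨_, (TyEq.merge h₁ h₂ (Ty.isRec_record _) (Ty.isRec_record _) e₁ e₂).trans
      (Ty.tyEq_merge_record L₂ L₁), fun p hp => ?_⟩
    rcases List.mem_append.1 hp with hp | hp
    · obtain ⟨hp, hpL₂⟩ := List.mem_filter.1 hp
      have hpρ₂ : p.1 ∉ lbl ρ₂ := fun hl =>
        of_decide_eq_true hpL₂ (Ty.mem_lbl_record.1 (e₂.2.lbl_subset hl))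
      simpa [Ty.fieldsAt, hpρ₂] using v₁ p hp
    · simpa [Ty.fieldsAt, Ty.mem_lbl_of_mem_fieldsAt (v₂ p hp)] using v₂ p hp

namespace Typing

theorem rename {Γ Δ : List Ty} {M : Tm} {τ : Ty} {f : Nat → Nat} (h : Typing Γ M τ)
    (hf : ∀ x σ, Γ[x]? = some σ → Δ[f x]? = some σ) : Typing Δ (M.rename f) τ := by
  induction h generalizing Δ f with
  | var hx => exact .var (hf _ _ hx)
  | lam _ ih =>
    refine .lam (ih fun x σ hx => ?_)
    cases x <;> simp_all [Tm.liftF]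
  | app _ _ ih₁ ih₂ => exact .app (ih₁ hf) (ih₂ hf)
  | inter _ _ ih₁ ih₂ => exact .inter (ih₁ hf) (ih₂ hf)
  | omega => exact .omega _
  | sub _ hs ih => exact .sub (ih hf) hs
  | empty => exact .empty _
  | rcd hl _ ih => exact .rcd (by rw [Tm.lookup_renameFields, hl]; rfl) (ih hf)
  | sel _ ih => exact .sel (ih hf)
  | merge _ _ hr₁ hr₂ hlbl ih₁ ih₂ =>
    exact .merge (ih₁ hf) (ih₂ hf) hr₁ hr₂ (by rw [Tm.lblR, Tm.keys_renameFields]; exact hlbl)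

theorem subst {Γ Δ : List Ty} {M : Tm} {τ : Ty} {s : Nat → Tm} (h : Typing Γ M τ)
    (hs : ∀ x σ, Γ[x]? = some σ → Typing Δ (s x) σ) : Typing Δ (M.subst s) τ := by
  induction h generalizing Δ s with
  | var hx => exact hs _ _ hx
  | lam _ ih =>
    refine .lam (ih fun x σ hx => ?_)
    cases x with
    | zero => exact .var hx
    | succ n => exact (hs n σ hx).rename fun y _ hy => hy
  | app _ _ ih₁ ih₂ => exact .app (ih₁ hs) (ih₂ hs)
  | inter _ _ ih₁ ih₂ => exact .inter (ih₁ hs) (ih₂ hs)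
  | omega => exact .omega _
  | sub _ hsub ih => exact .sub (ih hs) hsub
  | empty => exact .empty _
  | rcd hl _ ih => exact .rcd (by rw [Tm.lookup_substFields, hl]; rfl) (ih hs)
  | sel _ ih => exact .sel (ih hs)
  | merge _ _ hr₁ hr₂ hlbl ih₁ ih₂ =>
    exact .merge (ih₁ hs) (ih₂ hs) hr₁ hr₂ (by rw [Tm.lblR, Tm.keys_substFields]; exact hlbl)

theorem subst0 {Γ : List Ty} {M N : Tm} {σ τ : Ty} (hM : Typing (σ :: Γ) M τ)
    (hN : Typing Γ N σ) : Typing Γ (Tm.subst0 N M) τ :=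
  hM.subst fun x _ hx => by
    cases x with
    | zero => cases hx; exact hN
    | succ n => exact .var hx

theorem narrow {Γ Δ : List Ty} {M : Tm} {τ : Ty} (h : Typing Γ M τ)
    (hΔ : ∀ (x : Nat) σ, Γ[x]? = some σ → ∃ σ', Δ[x]? = some σ' ∧ TySub σ' σ) : Typing Δ M τ := by
  induction h generalizing Δ with
  | var hx =>
    obtain ⟨σ', hx', hσ'⟩ := hΔ _ _ hx
    exact .sub (.var hx') hσ'
  | lam _ ih =>
    refine .lam (ih fun x σ hx => ?_)
    cases x with
    | zero => exact ⟨σ, hx, .refl σ⟩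
    | succ n => exact hΔ n σ hx
  | app _ _ ih₁ ih₂ => exact .app (ih₁ hΔ) (ih₂ hΔ)
  | inter _ _ ih₁ ih₂ => exact .inter (ih₁ hΔ) (ih₂ hΔ)
  | omega => exact .omega _
  | sub _ hs ih => exact .sub (ih hΔ) hs
  | empty => exact .empty _
  | rcd hl _ ih => exact .rcd hl (ih hΔ)
  | sel _ ih => exact .sel (ih hΔ)
  | merge _ _ hr₁ hr₂ hlbl ih₁ ih₂ => exact .merge (ih₁ hΔ) (ih₂ hΔ) hr₁ hr₂ hlbl

theorem narrow_head {Γ : List Ty} {M : Tm} {σ₁ σ₂ τ : Ty} (h : Typing (σ₁ :: Γ) M τ)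
    (hσ : TySub σ₂ σ₁) : Typing (σ₂ :: Γ) M τ :=
  h.narrow fun x σ hx => by
    cases x with
    | zero => cases hx; exact ⟨σ₂, rfl, hσ⟩
    | succ n => exact ⟨σ, hx, .refl σ⟩

theorem lam_inv {Γ : List Ty} {P : Tm} {υ : Ty} (h : Typing Γ (.lam P) υ) :
    ∀ p ∈ υ.arrows, Typing (p.1 :: Γ) P p.2 := by
  generalize hM : Tm.lam P = M at h
  induction h with
  | lam h => cases hM; simpa [Ty.arrows] using h
  | inter _ _ ih₁ ih₂ =>
    intro p hp
    rcases List.mem_append.1 hp with hp | hp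
    exacts [ih₁ hM p hp, ih₂ hM p hp]
  | omega => simp [Ty.arrows]
  | sub _ hs ih =>
    exact hs.forall_arrows (Q := fun σ τ => Typing (σ :: _) P τ) (.omega P)
      (fun hP hσ hτ => .sub (hP.narrow_head hσ) hτ) .inter (ih hM)
  | _ => cases hM

theorem rcd_inv {Γ : List Ty} {fs : List (Nat × Tm)} {υ : Ty} (h : Typing Γ (.rcd fs) υ)
    (l : Nat) : ∀ σ ∈ υ.fieldsAt l, ∃ N, fs.lookup l = some N ∧ Typing Γ N σ := by
  generalize hM : Tm.rcd fs = M at h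
  induction h with
  | rcd hl h =>
    cases hM
    simp only [Ty.fieldsAt]
    split_ifs with hl'
    · subst hl'; simpa using ⟨_, hl, h⟩
    · simp
  | inter _ _ ih₁ ih₂ =>
    intro σ hσ
    rcases List.mem_append.1 hσ with hσ | hσ
    exacts [ih₁ hM σ hσ, ih₂ hM σ hσ]
  | omega | empty => simp [Ty.fieldsAt]
  | sub _ hs ih =>
    refine hs.forall_fieldsAt (fun ⟨N, hN, hT⟩ hσ => ⟨N, hN, .sub hT hσ⟩) ?_ l (ih hM)
    rintro σ τ ⟨N, hN, hσ⟩ ⟨N', hN', hτ⟩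
    cases hN.symm.trans hN'
    exact ⟨N, hN, .inter hσ hτ⟩
  | _ => cases hM

theorem of_lookup_of_rcd_fld {Γ : List Ty} {fs : List (Nat × Tm)} {l : Nat} {N : Tm} {σ : Ty}
    (h : Typing Γ (.rcd fs) (.fld l σ)) (hN : fs.lookup l = some N) : Typing Γ N σ := by
  obtain ⟨N', hN', hT⟩ := h.rcd_inv l σ (by simp [Ty.fieldsAt])
  cases hN.symm.trans hN'
  exact hT

theorem rcd_record {Γ : List Ty} {fs : List (Nat × Tm)} :
    ∀ {L : List (Nat × Ty)}, (∀ p ∈ L, ∃ N, fs.lookup p.1 = some N ∧ Typing Γ N p.2) →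
      Typing Γ (.rcd fs) (Ty.record L)
  | [], _ => .empty fs
  | (l, σ) :: L, h => by
    obtain ⟨N, hN, hT⟩ := h (l, σ) (by simp)
    exact .inter (.rcd hN hT) (rcd_record fun p hp => h p (by simp [hp]))

theorem rcd_of_fieldsAt {Γ : List Ty} {fs : List (Nat × Tm)} {ρ : Ty} (hρ : IsRec ρ)
    (h : ∀ l, ∀ σ ∈ ρ.fieldsAt l, ∃ N, fs.lookup l = some N ∧ Typing Γ N σ) :
    Typing Γ (.rcd fs) ρ := by
  obtain ⟨L, hL, hfields⟩ := hρ.exists_tyEq_record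
  exact .sub (rcd_record fun p hp => h p.1 p.2 (hfields p hp)) hL.2

theorem rcd_mergeFields {Γ : List Ty} {fs gs : List (Nat × Tm)} {ρ₁ ρ₂ : Ty}
    (h₁ : Typing Γ (.rcd fs) ρ₁) (h₂ : Typing Γ (.rcd gs) ρ₂) (hρ₁ : IsRec ρ₁) (hρ₂ : IsRec ρ₂)
    (hlbl : Tm.lblR gs = lbl ρ₂) : Typing Γ (.rcd (Tm.mergeFields fs gs)) (.merge ρ₁ ρ₂) := by
  refine rcd_of_fieldsAt (.merge hρ₁ hρ₂) fun l σ hσ => ?_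
  have hkeys : l ∈ Tm.keys gs ↔ l ∈ lbl ρ₂ := by rw [← hlbl, Tm.lblR, List.mem_toFinset]
  simp only [Ty.fieldsAt] at hσ
  simp only [Tm.lookup_mergeFields, hkeys]
  split_ifs at hσ ⊢
  exacts [h₂.rcd_inv l σ hσ, h₁.rcd_inv l σ hσ]

end Typing

/-- Subject reduction: typing is preserved under reduction. -/
theorem subject_reduction (Γ : List Ty) (M N : Tm) (σ : Ty)
    (hM : Typing Γ M σ) (hR : Red M N) :
    Typing Γ N σ := by
  induction hM generalizing N with
  | var => cases hR
  | lam _ ih => cases hR with | lam hr => exact .lam (ih _ hr)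
  | app h₁ h₂ ih₁ ih₂ =>
    cases hR with
    | beta => exact (h₁.lam_inv _ (List.mem_singleton_self _)).subst0 h₂
    | appL _ hr => exact .app (ih₁ _ hr) h₂
    | appR _ hr => exact .app h₁ (ih₂ _ hr)
  | inter _ _ ih₁ ih₂ => exact .inter (ih₁ _ hR) (ih₂ _ hR)
  | omega => exact .omega _
  | sub _ hs ih => exact .sub (ih _ hR) hs
  | empty => cases hR with | rcdField => exact .empty _
  | rcd hl h ih =>
    cases hR with
    | rcdField _ _ _ hr =>
      rcases List.lookup_append_cons_eq_some hl with hl' | ⟨rfl, hl'⟩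
      exacts [.rcd hl' h, .rcd hl' (ih _ hr)]
  | sel h ih =>
    cases hR with
    | sel hN => exact h.of_lookup_of_rcd_fld hN
    | selC _ hr => exact .sel (ih _ hr)
  | merge h₁ h₂ hρ₁ hρ₂ hlbl ih₁ ih₂ =>
    cases hR with
    | mergeRcd => exact h₁.rcd_mergeFields h₂ hρ₁ hρ₂ hlbl
    | mergeL _ hr => exact .merge (ih₁ _ hr) h₂ hρ₁ hρ₂ hlbl
    | mergeField _ _ _ _ hr =>
      exact .merge h₁ (ih₂ _ (.rcdField _ _ _ hr)) hρ₁ hρ₂ (by simpa [Tm.lblR, Tm.keys] using hlbl)
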